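/- arXiv:2008.10362 — 7 statements merged into one kernel-verified Lean document; each statement's English description precedes it below -/
import Mathlib

section
/- Let h : ℝ^n → (-∞, ∞] be proper, closed, and convex with nonempty domain X, let X^d ⊆ X be finite and nonempty, and let y ∈ ℝ^n with x ∈ ∂h*(y) (the subdifferential of the conjugate at y). Then h*(y) - h^{*d}(y) ≤ [‖y‖ + Lip(h; {x} ∪ X^d)] · dist(x, X^d), where Lip(h; S) denotes the Lipschitz constant of h restricted to S and dist(x, X^d) = min_{z ∈ X^d} ‖x - z‖. -/
/-!
If `x ∈ ∂h*(y)` then `x` attains the supremum defining `h*(y)`, i.e. `h*(y) = ⟪y, x⟫ - h x`;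
for a closed convex `h` this follows from the existence of `ε`-subgradients of `h` at `x`,
obtained by separating `(x, h x - ε)` from the closed epigraph. Comparing with the sample
`z₀ ∈ Xd` nearest to `x` then gives
`h*(y) - h^{*d}(y) ≤ ⟪y, x - z₀⟫ + (h z₀ - h x) ≤ (‖y‖ + K) ‖x - z₀‖`.
-/

open Metric Set

open scoped RealInnerProductSpace

variable {E : Type*} [NormedAddCommGroup E] [InnerProductSpace ℝ E]

/-- The conjugate of `h` restricted to `X`; as a real `sSup` it is `0` wherever the supremum
is infinite. -/
noncomputable def fenchelConj (h : E → ℝ) (X : Set E) (y : E) : ℝ :=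
  sSup ((fun w => ⟪y, w⟫ - h w) '' X)

theorem LowerSemicontinuousOn.notMem_closure_epigraph {α : Type*} [TopologicalSpace α]
    {f : α → ℝ} {X : Set α} (hf : LowerSemicontinuousOn f X) {x : α} (hx : x ∈ X)
    {ε : ℝ} (hε : 0 < ε) : (x, f x - ε) ∉ closure {p : α × ℝ | p.1 ∈ X ∧ f p.1 ≤ p.2} := by
  intro hmem
  obtain ⟨U, hUopen, hxU, hU⟩ :=
    mem_nhdsWithin.mp (hf x hx (f x - ε / 2) (by linarith))
  obtain ⟨⟨w, t⟩, ⟨hwU, ht⟩, hwX, hwt⟩ := mem_closure_iff.mp hmem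
    (U ×ˢ Iio (f x - ε / 2)) (hUopen.prod isOpen_Iio) ⟨hxU, by simp only [mem_Iio]; linarith⟩
  have hlt : f x - ε / 2 < f w := hU ⟨hwU, hwX⟩
  simp only [mem_Iio] at ht hwt
  linarith

theorem StrongDual.exists_inner_add_mul_eq [CompleteSpace E] (F : StrongDual ℝ (E × ℝ)) :
    ∃ a : E, ∀ w t, F (w, t) = ⟪a, w⟫ + t * F (0, 1) := by
  refine ⟨(InnerProductSpace.toDual ℝ E).symm (F.comp (.inl ℝ E ℝ)), fun w t => ?_⟩
  have hsplit : ((w, t) : E × ℝ) = (w, 0) + t • (0, 1) := by simp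
  rw [InnerProductSpace.toDual_symm_apply, hsplit, map_add, map_smul, smul_eq_mul]
  rfl

theorem ConvexOn.exists_eps_subgradient [CompleteSpace E] {h : E → ℝ} {X : Set E}
    (hconv : ConvexOn ℝ X h) (hlsc : LowerSemicontinuousOn h X) {x : E} (hx : x ∈ X)
    {ε : ℝ} (hε : 0 < ε) : ∃ z : E, ∀ w ∈ X, h x + ⟪z, w - x⟫ - ε ≤ h w := by
  obtain ⟨F, u, hFx, hFS⟩ := geometric_hahn_banach_point_closed
    hconv.convex_epigraph.closure isClosed_closure (hlsc.notMem_closure_epigraph hx hε)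
  obtain ⟨a, ha⟩ := F.exists_inner_add_mul_eq
  set s := F (0, 1)
  have hsep : ∀ w ∈ X, ⟪a, x⟫ + (h x - ε) * s < ⟪a, w⟫ + h w * s := fun w hw => by
    have hw' := hFS (w, h w) (subset_closure ⟨hw, le_rfl⟩)
    rw [ha] at hFx hw'
    linarith
  -- the separating hyperplane is not vertical
  have hs : 0 < s := by nlinarith [hsep x hx]
  refine ⟨-s⁻¹ • a, fun w hw => ?_⟩
  have hquot : (⟪a, x⟫ - ⟪a, w⟫) / s ≤ h w - h x + ε := by
    rw [div_le_iff₀ hs]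
    linarith [hsep w hw]
  rw [real_inner_smul_left, inner_sub_right]
  have hrw : -s⁻¹ * (⟪a, w⟫ - ⟪a, x⟫) = (⟪a, x⟫ - ⟪a, w⟫) / s := by ring
  linarith

theorem fenchelConj_le_inner_sub_of_subgradient [CompleteSpace E] {h : E → ℝ} {X : Set E}
    (hconv : ConvexOn ℝ X h) (hlsc : LowerSemicontinuousOn h X) {y x : E} (hx : x ∈ X)
    (hsubgrad : ∀ z, fenchelConj h X z ≥ fenchelConj h X y + ⟪x, z - y⟫) :
    fenchelConj h X y ≤ ⟪y, x⟫ - h x := by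
  refine le_of_forall_pos_le_add fun ε hε => ?_
  obtain ⟨z, hz⟩ := hconv.exists_eps_subgradient hlsc hx hε
  have hconj_z : fenchelConj h X z ≤ ⟪z, x⟫ - h x + ε := by
    refine csSup_le ⟨_, mem_image_of_mem _ hx⟩ ?_
    rintro _ ⟨w, hw, rfl⟩
    linarith [hz w hw, inner_sub_right (𝕜 := ℝ) z w x]
  linarith [hsubgrad z, inner_sub_right (𝕜 := ℝ) x z y, real_inner_comm x z, real_inner_comm x y]

theorem conj_sub_discrete_conj_le_general {n : ℕ}
    (h : EuclideanSpace ℝ (Fin n) → ℝ)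
    (X : Set (EuclideanSpace ℝ (Fin n)))
    (hconv : ConvexOn ℝ X h) (hlsc : LowerSemicontinuousOn h X)
    (Xd : Set (EuclideanSpace ℝ (Fin n)))
    (hXdfin : Xd.Finite) (hXdne : Xd.Nonempty)
    (y x : EuclideanSpace ℝ (Fin n)) (hx : x ∈ X)
    -- `x` is a subgradient point of the conjugate `h*` at `y`, i.e. `x ∈ ∂h*(y)`:
    (hsubgrad : ∀ z : EuclideanSpace ℝ (Fin n),
        sSup ((fun w => (inner ℝ z w : ℝ) - h w) '' X)
          ≥ sSup ((fun w => (inner ℝ y w : ℝ) - h w) '' X) + (inner ℝ x (z - y) : ℝ))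
    -- `K` is the Lipschitz constant of `h` on `{x} ∪ Xd`:
    (K : ℝ)
    (hlip : ∀ a ∈ insert x Xd, ∀ b ∈ insert x Xd, |h a - h b| ≤ K * ‖a - b‖) :
    sSup ((fun w => (inner ℝ y w : ℝ) - h w) '' X)
        - sSup ((fun w => (inner ℝ y w : ℝ) - h w) '' Xd)
      ≤ (‖y‖ + K) * Metric.infDist x Xd := by
  obtain ⟨z₀, hz₀, hdist⟩ := hXdfin.isCompact.exists_infDist_eq_dist hXdne x
  have hlip_z₀ : h z₀ - h x ≤ K * ‖x - z₀‖ := by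
    simpa only [norm_sub_rev z₀ x] using
      (le_abs_self _).trans (hlip z₀ (mem_insert_of_mem _ hz₀) x (mem_insert _ _))
  calc fenchelConj h X y - fenchelConj h Xd y
      ≤ (⟪y, x⟫ - h x) - (⟪y, z₀⟫ - h z₀) :=
        sub_le_sub (fenchelConj_le_inner_sub_of_subgradient hconv hlsc hx hsubgrad)
          (le_csSup (hXdfin.image _).bddAbove (mem_image_of_mem _ hz₀))
    _ = ⟪y, x - z₀⟫ + (h z₀ - h x) := by rw [inner_sub_right]; ring
    _ ≤ ‖y‖ * ‖x - z₀‖ + K * ‖x - z₀‖ := add_le_add (real_inner_le_norm _ _) hlip_z₀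
    _ = (‖y‖ + K) * Metric.infDist x Xd := by rw [hdist, dist_eq_norm]; ring

/-- Pointwise error bound for discrete conjugation: for `h` proper, closed,
convex with domain `X`, a finite sample `Xd ⊆ X`, and `x ∈ ∂h*(y)`,
`h*(y) - h^{*d}(y) ≤ (‖y‖ + Lip(h; {x} ∪ Xd)) · dist(x, Xd)`. -/
theorem conj_sub_discrete_conj_le {n : ℕ}
    (h : EuclideanSpace ℝ (Fin n) → ℝ)
    (X : Set (EuclideanSpace ℝ (Fin n))) (hXne : X.Nonempty)
    (hconv : ConvexOn ℝ X h) (hlsc : LowerSemicontinuousOn h X)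
    (Xd : Set (EuclideanSpace ℝ (Fin n)))
    (hXdsub : Xd ⊆ X) (hXdfin : Xd.Finite) (hXdne : Xd.Nonempty)
    (y x : EuclideanSpace ℝ (Fin n)) (hx : x ∈ X)
    -- `x` is a subgradient point of the conjugate `h*` at `y`, i.e. `x ∈ ∂h*(y)`:
    (hsubgrad : ∀ z : EuclideanSpace ℝ (Fin n),
        sSup ((fun w => (inner ℝ z w : ℝ) - h w) '' X)
          ≥ sSup ((fun w => (inner ℝ y w : ℝ) - h w) '' X) + (inner ℝ x (z - y) : ℝ))
    -- `K` is the Lipschitz constant of `h` on `{x} ∪ Xd`: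
    (K : ℝ) (hK : 0 ≤ K)
    (hlip : ∀ a ∈ insert x Xd, ∀ b ∈ insert x Xd, |h a - h b| ≤ K * ‖a - b‖) :
    sSup ((fun w => (inner ℝ y w : ℝ) - h w) '' X)
        - sSup ((fun w => (inner ℝ y w : ℝ) - h w) '' Xd)
      ≤ (‖y‖ + K) * Metric.infDist x Xd :=
  conj_sub_discrete_conj_le_general h X hconv hlsc Xd hXdfin hXdne y x hx hsubgrad K hlip
end

section
/- Let h : ℝ^n → (-∞, ∞] be proper, closed, convex with compact domain X, Lipschitz continuous on X with constant Lip(h), and let X^d ⊆ X be finite and nonempty. Then for every y ∈ ℝ^n, 0 ≤ h*(y) - h^{*d}(y) ≤ [‖y‖ + Lip(h)] · d_H(X, X^d), where d_H(X, X^d) = sup_{x ∈ X} min_{z ∈ X^d} ‖x - z‖ is the one-sided Hausdorff distance from X to X^d. -/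
/-!
Let `f w = ⟪y, w⟫ - h w`, which is `(‖y‖ + K)`-Lipschitz on `X`. If `x` maximizes `f` over the
compact set `X`, then for every `z ∈ Xd` we have `f x ≤ f z + (‖y‖ + K) ‖x - z‖`, and taking the
infimum over `z` bounds the gap by `(‖y‖ + K) · infDist x Xd ≤ (‖y‖ + K) · d_H(X, Xd)`.
-/

open Metric

section Lipschitz

variable {α : Type*} [PseudoMetricSpace α] {g : α → ℝ} {K : NNReal} {X s : Set α}

theorem LipschitzOnWith.le_sSup_image_add_mul_infDist (hg : LipschitzOnWith K g X)
    (hsX : s ⊆ X) (hs : s.Nonempty) (hbdd : BddAbove (g '' s)) {x : α} (hx : x ∈ X) :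
    g x ≤ sSup (g '' s) + K * infDist x s := by
  have : Nonempty s := hs.to_subtype
  have hgap : ∀ z : s, g x - sSup (g '' s) ≤ K * dist x z := fun ⟨z, hz⟩ => by
    have hgz : g z ≤ sSup (g '' s) := le_csSup hbdd ⟨z, hz, rfl⟩
    have hlip : g x - g z ≤ K * dist x z := by
      have := hg.dist_le_mul x hx z (hsX hz)
      rw [Real.dist_eq] at this
      exact (le_abs_self _).trans this
    linarith
  rw [infDist_eq_iInf, Real.mul_iInf_of_nonneg K.coe_nonneg]
  linarith [le_ciInf hgap]

theorem LipschitzOnWith.sSup_image_sub_sSup_image_le (hg : LipschitzOnWith K g X)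
    (hX : IsCompact X) (hsX : s ⊆ X) (hs : s.Nonempty) :
    sSup (g '' X) - sSup (g '' s) ≤ K * sSup ((infDist · s) '' X) := by
  have hbdd : BddAbove (g '' X) := (hX.image_of_continuousOn hg.continuousOn).bddAbove
  obtain ⟨x, hx, hmax⟩ := hX.exists_sSup_image_eq (hs.mono hsX) hg.continuousOn
  have hinfDist : infDist x s ≤ sSup ((infDist · s) '' X) :=
    le_csSup (hX.image (continuous_infDist_pt s)).bddAbove ⟨x, hx, rfl⟩
  have hx_le := hg.le_sSup_image_add_mul_infDist hsX hs (hbdd.mono (Set.image_mono hsX)) hx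
  rw [hmax]
  linarith [mul_le_mul_of_nonneg_left hinfDist K.coe_nonneg]

end Lipschitz

theorem LipschitzOnWith.inner_sub {E : Type*} [NormedAddCommGroup E] [InnerProductSpace ℝ E]
    {h : E → ℝ} {K : NNReal} {X : Set E} (hh : LipschitzOnWith K h X) (y : E) :
    LipschitzOnWith (‖y‖₊ + K) (fun w => (inner ℝ y w : ℝ) - h w) X := by
  have hnorm : ‖innerSL ℝ y‖₊ = ‖y‖₊ := Subtype.ext (innerSL_apply_norm ℝ y)
  have hinner : LipschitzWith ‖y‖₊ (inner ℝ y) := hnorm ▸ (innerSL ℝ y).lipschitz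
  exact hinner.lipschitzOnWith.sub hh

theorem conj_sub_discrete_conj_uniform_general {n : ℕ}
    (h : EuclideanSpace ℝ (Fin n) → ℝ)
    (X : Set (EuclideanSpace ℝ (Fin n))) (hXc : IsCompact X)
    (Xd : Set (EuclideanSpace ℝ (Fin n)))
    (hXdsub : Xd ⊆ X) (hXdne : Xd.Nonempty)
    (K : ℝ) (hK : 0 ≤ K)
    (hlip : ∀ a ∈ X, ∀ b ∈ X, |h a - h b| ≤ K * ‖a - b‖)
    (y : EuclideanSpace ℝ (Fin n)) :
    0 ≤ sSup ((fun w => (inner ℝ y w : ℝ) - h w) '' X)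
          - sSup ((fun w => (inner ℝ y w : ℝ) - h w) '' Xd) ∧
    sSup ((fun w => (inner ℝ y w : ℝ) - h w) '' X)
          - sSup ((fun w => (inner ℝ y w : ℝ) - h w) '' Xd)
      ≤ (‖y‖ + K) * sSup ((fun z => Metric.infDist z Xd) '' X) := by
  have hh : LipschitzOnWith K.toNNReal h X := .of_dist_le_mul fun a ha b hb => by
    rw [Real.coe_toNNReal K hK, Real.dist_eq, dist_eq_norm]
    exact hlip a ha b hb
  have hf := hh.inner_sub y
  refine ⟨sub_nonneg.mpr ?_, ?_⟩
  · exact csSup_le_csSup (hXc.image_of_continuousOn hf.continuousOn).bddAbove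
      (hXdne.image _) (Set.image_mono hXdsub)
  · simpa [Real.coe_toNNReal K hK] using hf.sSup_image_sub_sSup_image_le hXc hXdsub hXdne

/-- Uniform error bound for discrete conjugation: for `h` proper, closed,
convex and `K`-Lipschitz on its compact domain `X`, and `Xd ⊆ X` finite nonempty,
`0 ≤ h*(y) - h^{*d}(y) ≤ (‖y‖ + K) · d_H(X, Xd)` for every `y`. -/
theorem conj_sub_discrete_conj_uniform {n : ℕ}
    (h : EuclideanSpace ℝ (Fin n) → ℝ)
    (X : Set (EuclideanSpace ℝ (Fin n))) (hXc : IsCompact X) (hXne : X.Nonempty)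
    (hconv : ConvexOn ℝ X h) (hlsc : LowerSemicontinuousOn h X)
    (Xd : Set (EuclideanSpace ℝ (Fin n)))
    (hXdsub : Xd ⊆ X) (hXdfin : Xd.Finite) (hXdne : Xd.Nonempty)
    (K : ℝ) (hK : 0 ≤ K)
    (hlip : ∀ a ∈ X, ∀ b ∈ X, |h a - h b| ≤ K * ‖a - b‖)
    (y : EuclideanSpace ℝ (Fin n)) :
    0 ≤ sSup ((fun w => (inner ℝ y w : ℝ) - h w) '' X)
          - sSup ((fun w => (inner ℝ y w : ℝ) - h w) '' Xd) ∧
    sSup ((fun w => (inner ℝ y w : ℝ) - h w) '' X)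
          - sSup ((fun w => (inner ℝ y w : ℝ) - h w) '' Xd)
      ≤ (‖y‖ + K) * sSup ((fun z => Metric.infDist z Xd) '' X) :=
  conj_sub_discrete_conj_uniform_general h X hXc Xd hXdsub hXdne K hK hlip y
end

section
/- Let h : ℝ → (-∞, ∞] have compact domain X ⊂ ℝ, and let y1 < y2 be given dual points. Define the piecewise-linear interpolation L(y) = ((y2 - y)·h*(y1) + (y - y1)·h*(y2))/(y2 - y1) for y ∈ [y1, y2]. Then for all y ∈ [y1, y2], 0 ≤ L(y) - h*(y) ≤ diam(X) · min(y - y1, y2 - y). -/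
/-- If the set of values `v*x - h x` over a bounded set `X` is bounded above
for one slope `v`, it is bounded above for any slope `w`. -/
lemma bdd_shift_aux (h : ℝ → ℝ) (X : Set ℝ) (hXc : IsCompact X) (v w : ℝ)
    (hb : BddAbove ((fun x => v * x - h x) '' X)) :
    BddAbove ((fun x => w * x - h x) '' X) := by
  obtain ⟨C, hC⟩ := isBounded_iff_forall_norm_le.mp hXc.isBounded
  obtain ⟨b, hbb⟩ := hb
  refine ⟨b + |w - v| * C, ?_⟩
  rintro _ ⟨x, hx, rfl⟩
  have h1 : v * x - h x ≤ b := hbb ⟨x, hx, rfl⟩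
  have h2 : |x| ≤ C := hC x hx
  have h3 : (w - v) * x ≤ |w - v| * C := by
    calc (w - v) * x ≤ |(w - v) * x| := le_abs_self _
      _ = |w - v| * |x| := abs_mul _ _
      _ ≤ |w - v| * C := mul_le_mul_of_nonneg_left h2 (abs_nonneg _)
  show w * x - h x ≤ b + |w - v| * C
  nlinarith

/-- The conjugate of `h` (with domain `X ⊂ ℝ`) at `v`. -/
noncomputable def conj1d (h : ℝ → ℝ) (X : Set ℝ) (v : ℝ) : ℝ :=
  sSup ((fun x => v * x - h x) '' X)

/-- One-dimensional linear interpolation error for the conjugate: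
for `y ∈ [y1, y2]`, `0 ≤ L(y) - h*(y) ≤ diam(X) · min(y - y1, y2 - y)`, where
`L` is the linear interpolation of `h*` between `y1` and `y2`. -/
theorem conj_lerp_error_1d (h : ℝ → ℝ) (X : Set ℝ)
    (hXc : IsCompact X) (hXne : X.Nonempty)
    (y1 y2 : ℝ) (h12 : y1 < y2) (y : ℝ) (hy : y ∈ Set.Icc y1 y2) :
    0 ≤ ((y2 - y) * conj1d h X y1 + (y - y1) * conj1d h X y2) / (y2 - y1)
          - conj1d h X y ∧
    ((y2 - y) * conj1d h X y1 + (y - y1) * conj1d h X y2) / (y2 - y1)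
          - conj1d h X y
      ≤ Metric.diam X * min (y - y1) (y2 - y) := by
  obtain ⟨hy1, hy2⟩ := hy
  have hpos : (0:ℝ) < y2 - y1 := by linarith
  have hdiam : 0 ≤ Metric.diam X := Metric.diam_nonneg
  have hmin : 0 ≤ min (y - y1) (y2 - y) := le_min (by linarith) (by linarith)
  by_cases hb : BddAbove ((fun x => y1 * x - h x) '' X)
  · have hbv : ∀ v : ℝ, BddAbove ((fun x => v * x - h x) '' X) :=
      fun v => bdd_shift_aux h X hXc y1 v hb
    have hne : ∀ v : ℝ, ((fun x => v * x - h x) '' X).Nonempty :=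
      fun v => hXne.image _
    have hle : ∀ v x, x ∈ X → v * x - h x ≤ conj1d h X v :=
      fun v x hx => le_csSup (hbv v) ⟨x, hx, rfl⟩
    have hnear : ∀ v : ℝ, ∀ ε : ℝ, 0 < ε →
        ∃ x ∈ X, conj1d h X v - ε < v * x - h x := by
      intro v ε hε
      obtain ⟨a, ⟨x, hx, rfl⟩, hlt⟩ :=
        exists_lt_of_lt_csSup (hne v) (show conj1d h X v - ε < conj1d h X v by linarith)
      exact ⟨x, hx, hlt⟩
    have hMX : sSup X ∈ X := hXc.sSup_mem hXne
    have hmX : sInf X ∈ X := hXc.sInf_mem hXne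
    have hxleM : ∀ x ∈ X, x ≤ sSup X := fun x hx => le_csSup hXc.isBounded.bddAbove hx
    have hmlex : ∀ x ∈ X, sInf X ≤ x := fun x hx => csInf_le hXc.isBounded.bddBelow hx
    have hdistM : ∀ x ∈ X, sSup X - x ≤ Metric.diam X := by
      intro x hx
      have := Metric.dist_le_diam_of_mem hXc.isBounded hMX hx
      rw [Real.dist_eq] at this
      calc sSup X - x ≤ |sSup X - x| := le_abs_self _
        _ ≤ Metric.diam X := this
    have hdistm : ∀ x ∈ X, x - sInf X ≤ Metric.diam X := by
      intro x hx
      have := Metric.dist_le_diam_of_mem hXc.isBounded hx hmX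
      rw [Real.dist_eq] at this
      calc x - sInf X ≤ |x - sInf X| := le_abs_self _
        _ ≤ Metric.diam X := this
    have hA : conj1d h X y2 ≤ conj1d h X y1 + (y2 - y1) * sSup X := by
      apply csSup_le (hne y2)
      rintro _ ⟨x, hx, rfl⟩
      have h1 := hle y1 x hx
      have h2 := hxleM x hx
      show y2 * x - h x ≤ _
      nlinarith
    have hB : conj1d h X y1 ≤ conj1d h X y2 - (y2 - y1) * sInf X := by
      apply csSup_le (hne y1)
      rintro _ ⟨x, hx, rfl⟩
      have h1 := hle y2 x hx
      have h2 := hmlex x hx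
      show y1 * x - h x ≤ _
      nlinarith
    have hlow : conj1d h X y
        ≤ ((y2 - y) * conj1d h X y1 + (y - y1) * conj1d h X y2) / (y2 - y1) := by
      apply csSup_le (hne y)
      rintro _ ⟨x, hx, rfl⟩
      show y * x - h x ≤ _
      rw [le_div_iff₀ hpos]
      have h1 := mul_le_mul_of_nonneg_left (hle y1 x hx) (show (0:ℝ) ≤ y2 - y by linarith)
      have h2 := mul_le_mul_of_nonneg_left (hle y2 x hx) (show (0:ℝ) ≤ y - y1 by linarith)
      nlinarith
    refine ⟨by linarith, ?_⟩
    have hub1 : ((y2 - y) * conj1d h X y1 + (y - y1) * conj1d h X y2) / (y2 - y1)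
        - conj1d h X y ≤ Metric.diam X * (y - y1) := by
      apply le_of_forall_pos_le_add
      intro ε hε
      obtain ⟨x1, hx1, hlt⟩ := hnear y1 ε hε
      have hfy1 : conj1d h X y1 - ε + (y - y1) * x1 ≤ conj1d h X y := by
        have := hle y x1 hx1
        nlinarith
      have h3 := hdistM x1 hx1
      rw [sub_le_iff_le_add, div_le_iff₀ hpos]
      have p1 := mul_le_mul_of_nonneg_left hA (show (0:ℝ) ≤ y - y1 by linarith)
      have p2 := mul_le_mul_of_nonneg_left h3
        (mul_nonneg (show (0:ℝ) ≤ y - y1 by linarith) (le_of_lt hpos))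
      have p3 := mul_le_mul_of_nonneg_left hfy1 (le_of_lt hpos)
      nlinarith
    have hub2 : ((y2 - y) * conj1d h X y1 + (y - y1) * conj1d h X y2) / (y2 - y1)
        - conj1d h X y ≤ Metric.diam X * (y2 - y) := by
      apply le_of_forall_pos_le_add
      intro ε hε
      obtain ⟨x2, hx2, hlt⟩ := hnear y2 ε hε
      have hfy2 : conj1d h X y2 - ε - (y2 - y) * x2 ≤ conj1d h X y := by
        have := hle y x2 hx2
        nlinarith
      have h3 := hdistm x2 hx2
      rw [sub_le_iff_le_add, div_le_iff₀ hpos]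
      have p1 := mul_le_mul_of_nonneg_left hB (show (0:ℝ) ≤ y2 - y by linarith)
      have p2 := mul_le_mul_of_nonneg_left h3
        (mul_nonneg (show (0:ℝ) ≤ y2 - y by linarith) (le_of_lt hpos))
      have p3 := mul_le_mul_of_nonneg_left hfy2 (le_of_lt hpos)
      nlinarith
    rcases le_total (y - y1) (y2 - y) with hc | hc
    · rw [min_eq_left hc]; exact hub1
    · rw [min_eq_right hc]; exact hub2
  · have hz : ∀ v : ℝ, conj1d h X v = 0 := by
      intro v
      apply Real.sSup_of_not_bddAbove
      intro hbv
      exact hb (bdd_shift_aux h X hXc v y1 hbv)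
    rw [hz, hz, hz]
    constructor
    · simp
    · simpa using mul_nonneg hdiam hmin
end

section
/- Let h : ℝ^n → (-∞, ∞] have compact domain X, let Y^g ⊂ ℝ^n be a finite grid, let y ∈ co(Y^g) be written as a convex combination y = Σ_k α_k y^{(k)} with y^{(k)} ∈ Y^g, α_k ≥ 0, Σ α_k = 1. Then the corresponding convex combination of conjugate values satisfies 0 ≤ Σ_k α_k h*(y^{(k)}) - h*(y) ≤ diam(X) · max_k ‖y^{(k)} - y‖. -/
open scoped BigOperators

/-- The conjugate of `h` (with domain `X ⊆ ℝ^n`) at `v`. -/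
noncomputable def conjE {n : ℕ} (h : EuclideanSpace ℝ (Fin n) → ℝ)
    (X : Set (EuclideanSpace ℝ (Fin n))) (v : EuclideanSpace ℝ (Fin n)) : ℝ :=
  sSup ((fun x => (inner ℝ v x : ℝ) - h x) '' X)

/-!
The conjugate is a supremum of affine functions of `y`, hence convex, which gives the lower
bound. For the upper bound fix `x₀ ∈ X` and split
`⟨y⁽ᵏ⁾, x⟩ = ⟨y, x⟩ + ⟨y⁽ᵏ⁾ - y, x - x₀⟩ + ⟨y⁽ᵏ⁾ - y, x₀⟩`: the middle term is at most
`‖y⁽ᵏ⁾ - y‖ · diam X`, and the last one is affine in `y⁽ᵏ⁾`, so its `α`-average vanishes.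
-/

open Finset

section BddAbove

variable {E : Type*} [NormedAddCommGroup E] [InnerProductSpace ℝ E]

theorem bddAbove_image_inner_sub {h : E → ℝ} {X : Set E} (hX : Bornology.IsBounded X) {v : E}
    (hv : BddAbove ((fun x => inner ℝ v x - h x) '' X)) (w : E) :
    BddAbove ((fun x => inner ℝ w x - h x) '' X) := by
  obtain ⟨C, hC⟩ := isBounded_iff_forall_norm_le.mp hX
  obtain ⟨c, hc⟩ := hv
  refine ⟨c + ‖w - v‖ * C, Set.forall_mem_image.2 fun x hx => ?_⟩
  have hvx : inner ℝ v x - h x ≤ c := hc (Set.mem_image_of_mem _ hx)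
  have hwvx : inner ℝ (w - v) x ≤ ‖w - v‖ * C :=
    (real_inner_le_norm _ _).trans (mul_le_mul_of_nonneg_left (hC x hx) (norm_nonneg _))
  rw [inner_sub_left] at hwvx
  linarith

end BddAbove

section Conjugate

variable {n : ℕ} {h : EuclideanSpace ℝ (Fin n) → ℝ} {X : Set (EuclideanSpace ℝ (Fin n))}

theorem inner_sub_le_conjE {v : EuclideanSpace ℝ (Fin n)}
    (hv : BddAbove ((fun x => inner ℝ v x - h x) '' X)) {x : EuclideanSpace ℝ (Fin n)}
    (hx : x ∈ X) : inner ℝ v x - h x ≤ conjE h X v :=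
  le_csSup hv (Set.mem_image_of_mem _ hx)

theorem conjE_le_of_forall_le (hX : X.Nonempty) {v : EuclideanSpace ℝ (Fin n)} {c : ℝ}
    (H : ∀ x ∈ X, inner ℝ v x - h x ≤ c) : conjE h X v ≤ c :=
  csSup_le (hX.image _) (Set.forall_mem_image.2 H)

theorem conjE_eq_zero_of_not_bddAbove (hX : Bornology.IsBounded X)
    {y : EuclideanSpace ℝ (Fin n)} (hy : ¬BddAbove ((fun x => inner ℝ y x - h x) '' X))
    (v : EuclideanSpace ℝ (Fin n)) :
    conjE h X v = 0 :=
  Real.sSup_of_not_bddAbove fun hv => hy (bddAbove_image_inner_sub hX hv y)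

/-- When the suprema are unbounded, `sSup` returns `0` and `conjE` vanishes identically;
otherwise it is a supremum of affine maps. -/
theorem convexOn_conjE (hXb : Bornology.IsBounded X) (hX : X.Nonempty) :
    ConvexOn ℝ Set.univ (conjE h X) := by
  by_cases hB : BddAbove ((fun x => inner ℝ 0 x - h x) '' X)
  · refine ⟨convex_univ, fun v _ w _ a b ha hb hab => conjE_le_of_forall_le hX fun x hx => ?_⟩
    have hv := inner_sub_le_conjE (bddAbove_image_inner_sub hXb hB v) hx
    have hw := inner_sub_le_conjE (bddAbove_image_inner_sub hXb hB w) hx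
    calc inner ℝ (a • v + b • w) x - h x
        = a * (inner ℝ v x - h x) + b * (inner ℝ w x - h x) := by
          rw [inner_add_left, real_inner_smul_left, real_inner_smul_left]
          linear_combination h x * hab
      _ ≤ a • conjE h X v + b • conjE h X w := by
          simp only [smul_eq_mul]; gcongr
  · rw [funext (conjE_eq_zero_of_not_bddAbove hXb hB)]
    exact convexOn_const 0 convex_univ

theorem conjE_le_conjE_add_inner_add_norm_mul_diam (hXb : Bornology.IsBounded X)
    {y : EuclideanSpace ℝ (Fin n)} (hy : BddAbove ((fun x => inner ℝ y x - h x) '' X))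
    {x₀ : EuclideanSpace ℝ (Fin n)} (hx₀ : x₀ ∈ X) (w : EuclideanSpace ℝ (Fin n)) :
    conjE h X w ≤ conjE h X y + inner ℝ (w - y) x₀ + ‖w - y‖ * Metric.diam X := by
  refine conjE_le_of_forall_le ⟨x₀, hx₀⟩ fun x hx => ?_
  have hyx := inner_sub_le_conjE hy hx
  have hdiam : inner ℝ (w - y) (x - x₀) ≤ ‖w - y‖ * Metric.diam X :=
    (real_inner_le_norm _ _).trans <| mul_le_mul_of_nonneg_left
      (by rw [← dist_eq_norm]; exact Metric.dist_le_diam_of_mem hXb hx hx₀) (norm_nonneg _)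
  have hsplit : inner ℝ w x = inner ℝ y x + inner ℝ (w - y) (x - x₀) + inner ℝ (w - y) x₀ := by
    simp only [inner_sub_left, inner_sub_right]; ring
  linarith

end Conjugate

theorem sum_mul_inner_sub_eq_zero {E ι : Type*} [NormedAddCommGroup E] [InnerProductSpace ℝ E]
    [Fintype ι] {α : ι → ℝ} {yk : ι → E} {y : E} (hαsum : ∑ k, α k = 1)
    (hrep : ∑ k, α k • yk k = y) (z : E) : ∑ k, α k * inner ℝ (yk k - y) z = 0 := by
  simp_rw [inner_sub_left, mul_sub, sum_sub_distrib, ← sum_mul, hαsum, one_mul,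
    ← real_inner_smul_left, ← sum_inner, hrep, sub_self]

theorem conj_convex_combination_error_general {n : ℕ} {ι : Type*} [Fintype ι]
    (h : EuclideanSpace ℝ (Fin n) → ℝ)
    (X : Set (EuclideanSpace ℝ (Fin n))) (hXc : IsCompact X) (hXne : X.Nonempty)
    (α : ι → ℝ) (yk : ι → EuclideanSpace ℝ (Fin n))
    (hα : ∀ k, 0 ≤ α k) (hαsum : ∑ k, α k = 1)
    (y : EuclideanSpace ℝ (Fin n)) (hrep : ∑ k, α k • yk k = y) :
    0 ≤ (∑ k, α k * conjE h X (yk k)) - conjE h X y ∧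
    (∑ k, α k * conjE h X (yk k)) - conjE h X y
      ≤ Metric.diam X * (⨆ k, ‖yk k - y‖) := by
  have hXb := hXc.isBounded
  have hjensen : conjE h X y ≤ ∑ k, α k * conjE h X (yk k) := by
    simpa [hrep] using (convexOn_conjE hXb hXne).map_sum_le (t := univ) (fun k _ => hα k)
      hαsum (fun k _ => Set.mem_univ (yk k))
  refine ⟨sub_nonneg.2 hjensen, ?_⟩
  by_cases hy : BddAbove ((fun x => inner ℝ y x - h x) '' X)
  · obtain ⟨x₀, hx₀⟩ := hXne
    have hmax (k : ι) : ‖yk k - y‖ ≤ ⨆ k, ‖yk k - y‖ :=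
      le_ciSup (f := fun k => ‖yk k - y‖) (Set.finite_range _).bddAbove k
    rw [sub_le_iff_le_add']
    calc ∑ k, α k * conjE h X (yk k)
        ≤ ∑ k, α k * (conjE h X y + inner ℝ (yk k - y) x₀
            + (⨆ k, ‖yk k - y‖) * Metric.diam X) := by
          gcongr with k
          · exact hα k
          · exact (conjE_le_conjE_add_inner_add_norm_mul_diam hXb hy hx₀ (yk k)).trans
              (by gcongr; exact hmax k)
      _ = conjE h X y + Metric.diam X * (⨆ k, ‖yk k - y‖) := by
          simp_rw [mul_add, sum_add_distrib, sum_mul_inner_sub_eq_zero hαsum hrep, ← sum_mul,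
            hαsum]
          ring
  · simp only [conjE_eq_zero_of_not_bddAbove hXb hy, mul_zero, sum_const_zero, sub_zero]
    exact mul_nonneg Metric.diam_nonneg (Real.iSup_nonneg fun k => norm_nonneg _)

/-- For `y = Σ_k α_k y^{(k)}` a convex combination of grid points of
`Yg`, the interpolation error of the conjugate satisfies
`0 ≤ Σ_k α_k h*(y^{(k)}) - h*(y) ≤ diam(X) · max_k ‖y^{(k)} - y‖`. -/
theorem conj_convex_combination_error {n : ℕ} {ι : Type*} [Fintype ι] [Nonempty ι]
    (h : EuclideanSpace ℝ (Fin n) → ℝ)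
    (X : Set (EuclideanSpace ℝ (Fin n))) (hXc : IsCompact X) (hXne : X.Nonempty)
    (Yg : Set (EuclideanSpace ℝ (Fin n))) (hYgfin : Yg.Finite)
    (α : ι → ℝ) (yk : ι → EuclideanSpace ℝ (Fin n))
    (hyk : ∀ k, yk k ∈ Yg) (hα : ∀ k, 0 ≤ α k) (hαsum : ∑ k, α k = 1)
    (y : EuclideanSpace ℝ (Fin n)) (hrep : ∑ k, α k • yk k = y) :
    0 ≤ (∑ k, α k * conjE h X (yk k)) - conjE h X y ∧
    (∑ k, α k * conjE h X (yk k)) - conjE h X y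
      ≤ Metric.diam X * (⨆ k, ‖yk k - y‖) :=
  conj_convex_combination_error_general h X hXc hXne α yk hα hαsum y hrep
end

section
/- Exactness of the discrete biconjugate in one dimension with slope grid: let X^g = {x^1 < x^2 < ... < x^N} ⊂ ℝ and let J : X^g → ℝ be convex-extensible (i.e., the slopes s^i = (J(x^{i+1}) - J(x^i))/(x^{i+1} - x^i) are nondecreasing in i). Choose Y^g = {s^1, ..., s^{N-1}}. Then for every x ∈ [x^1, x^N], the discrete biconjugate J^{**dd}(x) = max_{y ∈ Y^g} min_{z ∈ X^g} { (x - z)·y + J(z) } equals the piecewise linear interpolation of J on X^g evaluated at x. -/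
/-!
Because the slopes are nondecreasing, the line of slope `s k` through the left end of the
`k`-th cell lies below the data at every grid point. Hence the inner minimum for slope `s k`
is attained at that left end and equals this line evaluated at `t`. All of these lines lie below
the data at both ends of the cell containing `t`, where the `i`-th line interpolates the data,
so on that cell the `i`-th line is the largest of them.
-/

section GridSlopes

variable {N : ℕ} {x y : Fin (N + 1) → ℝ} {s : Fin N → ℝ}

theorem sub_le_mul_sub_of_forall_slope_le (hx : Monotone x)
    (hstep : ∀ m, y m.succ - y m.castSucc = s m * (x m.succ - x m.castSucc))
    {c : ℝ} {a b : Fin (N + 1)} (hab : a ≤ b)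
    (hc : ∀ m : Fin N, a ≤ m.castSucc → m.succ ≤ b → s m ≤ c) :
    y b - y a ≤ c * (x b - x a) := by
  induction b using Fin.induction with
  | zero =>
    obtain rfl : a = 0 := Fin.le_zero_iff.mp hab
    simp
  | succ m ih =>
    rcases hab.lt_or_eq with hlt | rfl
    · have ham : a ≤ m.castSucc := Fin.le_castSucc_iff.mpr hlt
      have hprev := ih ham fun m' h₁ h₂ => hc m' h₁ (h₂.trans (Fin.castSucc_le_succ m))
      have hlast := mul_le_mul_of_nonneg_right (hc m ham le_rfl)
        (sub_nonneg.mpr (hx (Fin.castSucc_le_succ m)))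
      linarith [hstep m]
    · simp

theorem mul_sub_le_sub_of_forall_le_slope (hx : Monotone x)
    (hstep : ∀ m, y m.succ - y m.castSucc = s m * (x m.succ - x m.castSucc))
    {c : ℝ} {a b : Fin (N + 1)} (hab : a ≤ b)
    (hc : ∀ m : Fin N, a ≤ m.castSucc → m.succ ≤ b → c ≤ s m) :
    c * (x b - x a) ≤ y b - y a := by
  have := sub_le_mul_sub_of_forall_slope_le (y := -y) (s := -s) (c := -c) hx
    (fun m => by simp only [Pi.neg_apply]; linarith [hstep m]) hab
    (fun m h₁ h₂ => neg_le_neg (hc m h₁ h₂))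
  simp only [Pi.neg_apply] at this
  linarith

theorem add_mul_sub_le_of_monotone_slope (hx : Monotone x)
    (hstep : ∀ m, y m.succ - y m.castSucc = s m * (x m.succ - x m.castSucc))
    (hs : Monotone s) (k : Fin N) (j : Fin (N + 1)) :
    y k.castSucc + s k * (x j - x k.castSucc) ≤ y j := by
  rcases le_total j k.castSucc with hjk | hkj
  · have := sub_le_mul_sub_of_forall_slope_le hx hstep hjk
      fun m _ hm => hs (Fin.succ_le_castSucc_iff.mp hm).le
    linarith
  · have := mul_sub_le_sub_of_forall_le_slope hx hstep hkj
      fun m hm _ => hs (Fin.castSucc_le_castSucc_iff.mp hm)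
    linarith

theorem inf'_sub_mul_add_eq_of_monotone_slope (hx : Monotone x)
    (hstep : ∀ m, y m.succ - y m.castSucc = s m * (x m.succ - x m.castSucc))
    (hs : Monotone s) (k : Fin N) (t : ℝ) :
    Finset.univ.inf' Finset.univ_nonempty (fun j => (t - x j) * s k + y j)
      = y k.castSucc + s k * (t - x k.castSucc) := by
  refine le_antisymm ?_ (Finset.le_inf' _ _ fun j _ => ?_)
  · refine (Finset.inf'_le _ (Finset.mem_univ k.castSucc)).trans_eq ?_
    ring
  · linarith [add_mul_sub_le_of_monotone_slope hx hstep hs k j]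

theorem add_mul_sub_le_of_mem_Icc_of_monotone_slope (hx : Monotone x)
    (hstep : ∀ m, y m.succ - y m.castSucc = s m * (x m.succ - x m.castSucc))
    (hs : Monotone s) (k i : Fin N) {t : ℝ} (ht : t ∈ Set.Icc (x i.castSucc) (x i.succ)) :
    y k.castSucc + s k * (t - x k.castSucc) ≤ y i.castSucc + s i * (t - x i.castSucc) := by
  have hleft := add_mul_sub_le_of_monotone_slope hx hstep hs k i.castSucc
  have hright := add_mul_sub_le_of_monotone_slope hx hstep hs k i.succ
  have hcell := hstep i
  rcases le_total (s k) (s i) with h | h <;> nlinarith [ht.1, ht.2]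

end GridSlopes

/-- Exactness of the discrete biconjugate in one dimension with the
slope grid: for a convex-extensible `J` on a strictly increasing grid `x : Fin (N+1) → ℝ`,
and `Yg` the set of consecutive slopes, the discrete biconjugate (in max-min form)
equals the piecewise linear interpolation of `J`: on every cell `[x_i, x_{i+1}]` it is
the affine function through `(x_i, J(x_i))` with slope `s_i`. -/
theorem discrete_biconjugate_exact_1d {N : ℕ} [NeZero N]
    (x : Fin (N + 1) → ℝ) (hmono : StrictMono x)
    (J : ℝ → ℝ)
    (s : Fin N → ℝ)
    (hs : ∀ i : Fin N,
      s i = (J (x i.succ) - J (x i.castSucc)) / (x i.succ - x i.castSucc))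
    -- convex-extensibility: the slopes are nondecreasing
    (hconvex : Monotone s)
    (i : Fin N) (t : ℝ) (ht : t ∈ Set.Icc (x i.castSucc) (x i.succ)) :
    Finset.univ.sup' Finset.univ_nonempty (fun k : Fin N =>
        Finset.univ.inf' Finset.univ_nonempty (fun j : Fin (N + 1) =>
          (t - x j) * s k + J (x j)))
      = J (x i.castSucc) + s i * (t - x i.castSucc) := by
  have hx : Monotone x := hmono.monotone
  have hstep : ∀ m, J (x m.succ) - J (x m.castSucc) = s m * (x m.succ - x m.castSucc) :=
    fun m => by
      rw [hs m, div_mul_cancel₀]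
      exact sub_ne_zero.mpr (hmono (Fin.castSucc_lt_succ (i := m))).ne'
  simp_rw [inf'_sub_mul_add_eq_of_monotone_slope (y := fun j => J (x j)) hx hstep hconvex]
  exact le_antisymm
    (Finset.sup'_le _ _ fun k _ =>
      add_mul_sub_le_of_mem_Icc_of_monotone_slope (y := fun j => J (x j)) hx hstep hconvex k i ht)
    (Finset.le_sup' (fun k => J (x k.castSucc) + s k * (t - x k.castSucc)) (Finset.mem_univ i))
end

section
/- Error bound for the discretized DP operator: let J, Ĵ : X → ℝ be Lipschitz functions on a compact set X ⊆ ℝ^n agreeing on a finite subset X^g ⊆ X, let C(x,·) be Lipschitz on a compact admissible set U(x), and f(x,·) : U(x) → X. Then for every x, |min_{u ∈ U(x)} {C(x,u) + Ĵ(f(x,u))} - min_{u ∈ U(x)} {C(x,u) + J(f(x,u))}| ≤ [Lip(J) + Lip(Ĵ)] · d_H(X, X^g), where d_H(X, X^g) = sup_{z ∈ X} dist(z, X^g). -/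
/-- State-discretization error bound for the discretized DP operator:
if `J` and `Ĵ` are Lipschitz on a compact `X` and agree on the finite subset `Xg ⊆ X`,
then the two minima differ by at most `(Lip(J) + Lip(Ĵ)) · d_H(X, Xg)`. -/
theorem ddp_state_discretization_error {n m : ℕ}
    (X : Set (EuclideanSpace ℝ (Fin n))) (hXcomp : IsCompact X)
    (Xg : Set (EuclideanSpace ℝ (Fin n)))
    (hXgsub : Xg ⊆ X) (hXgfin : Xg.Finite) (hXgne : Xg.Nonempty)
    (J Jhat : EuclideanSpace ℝ (Fin n) → ℝ)
    (LJ LJhat : ℝ) (hLJ : 0 ≤ LJ) (hLJhat : 0 ≤ LJhat)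
    (hJlip : ∀ a ∈ X, ∀ b ∈ X, |J a - J b| ≤ LJ * ‖a - b‖)
    (hJhatlip : ∀ a ∈ X, ∀ b ∈ X, |Jhat a - Jhat b| ≤ LJhat * ‖a - b‖)
    (hagree : ∀ z ∈ Xg, Jhat z = J z)
    (U : Set (EuclideanSpace ℝ (Fin m))) (hUcomp : IsCompact U) (hUne : U.Nonempty)
    (C : EuclideanSpace ℝ (Fin m) → ℝ)
    (LC : ℝ) (hClip : ∀ a ∈ U, ∀ b ∈ U, |C a - C b| ≤ LC * ‖a - b‖)
    (f : EuclideanSpace ℝ (Fin m) → EuclideanSpace ℝ (Fin n))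
    (hf : ∀ u ∈ U, f u ∈ X)
    -- both minima are attained on the compact admissible set `U`:
    (hatt1 : ∃ u ∈ U, C u + Jhat (f u) = sInf ((fun u => C u + Jhat (f u)) '' U))
    (hatt2 : ∃ u ∈ U, C u + J (f u) = sInf ((fun u => C u + J (f u)) '' U)) :
    |sInf ((fun u => C u + Jhat (f u)) '' U) - sInf ((fun u => C u + J (f u)) '' U)|
      ≤ (LJ + LJhat) * sSup ((fun z => Metric.infDist z Xg) '' X) := by

  obtain ⟨u1, hu1, h1⟩ := hatt1
  obtain ⟨u2, hu2, h2⟩ := hatt2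
  set D := sSup ((fun z => Metric.infDist z Xg) '' X) with hD
  have key : ∀ x ∈ X, |Jhat x - J x| ≤ (LJ + LJhat) * D := by
    intro x hx
    obtain ⟨z, hz, hdist⟩ := hXgfin.isCompact.exists_infDist_eq_dist hXgne x
    have hxz : ‖x - z‖ = Metric.infDist x Xg := by rw [hdist, dist_eq_norm]
    have hDle : Metric.infDist x Xg ≤ D := by
      apply le_csSup
      · exact (hXcomp.image (Metric.continuous_infDist_pt Xg)).bddAbove
      · exact ⟨x, hx, rfl⟩
    have hJh := hJhatlip x hx z (hXgsub hz)
    have hJ' := hJlip z (hXgsub hz) x hx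
    have hag := hagree z hz
    have hnn : (0:ℝ) ≤ Metric.infDist x Xg := Metric.infDist_nonneg
    calc |Jhat x - J x| = |(Jhat x - Jhat z) + (J z - J x)| := by rw [hag]; ring_nf
      _ ≤ |Jhat x - Jhat z| + |J z - J x| := abs_add_le _ _
      _ ≤ LJhat * ‖x - z‖ + LJ * ‖z - x‖ := add_le_add hJh hJ'
      _ = (LJ + LJhat) * Metric.infDist x Xg := by
          rw [norm_sub_rev z x, hxz]; ring
      _ ≤ (LJ + LJhat) * D := by nlinarith
  obtain ⟨RU, hRU⟩ := Metric.isBounded_iff.mp hUcomp.isBounded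
  obtain ⟨RX, hRX⟩ := Metric.isBounded_iff.mp hXcomp.isBounded
  have bdd : ∀ (g : EuclideanSpace ℝ (Fin n) → ℝ) (Lg : ℝ),
      (∀ a ∈ X, ∀ b ∈ X, |g a - g b| ≤ Lg * ‖a - b‖) →
      BddBelow ((fun u => C u + g (f u)) '' U) := by
    intro g Lg hg
    refine ⟨C u1 + g (f u1) - |LC| * RU - |Lg| * RX, ?_⟩
    rintro _ ⟨u, hu, rfl⟩
    have hC := hClip u hu u1 hu1
    have hg' := hg (f u) (hf u hu) (f u1) (hf u1 hu1)
    have hdU : ‖u - u1‖ ≤ RU := by rw [← dist_eq_norm]; exact hRU hu hu1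
    have hdX : ‖f u - f u1‖ ≤ RX := by
      rw [← dist_eq_norm]; exact hRX (hf u hu) (hf u1 hu1)
    have h3 : LC * ‖u - u1‖ ≤ |LC| * RU := by
      nlinarith [le_abs_self LC, abs_nonneg LC, norm_nonneg (u - u1)]
    have h4 : Lg * ‖f u - f u1‖ ≤ |Lg| * RX := by
      nlinarith [le_abs_self Lg, abs_nonneg Lg, norm_nonneg (f u - f u1)]
    have h5 := abs_le.mp (hC.trans h3)
    have h6 := abs_le.mp (hg'.trans h4)
    simp only []
    linarith [h5.1, h6.1]
  have bdd1 := bdd Jhat LJhat hJhatlip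
  have bdd2 := bdd J LJ hJlip
  have hA : sInf ((fun u => C u + Jhat (f u)) '' U)
      ≤ sInf ((fun u => C u + J (f u)) '' U) + (LJ + LJhat) * D := by
    have h7 : sInf ((fun u => C u + Jhat (f u)) '' U) ≤ C u2 + Jhat (f u2) :=
      csInf_le bdd1 ⟨u2, hu2, rfl⟩
    have h8 := (abs_le.mp (key (f u2) (hf u2 hu2))).2
    linarith
  have hB : sInf ((fun u => C u + J (f u)) '' U)
      ≤ sInf ((fun u => C u + Jhat (f u)) '' U) + (LJ + LJhat) * D := by
    have h7 : sInf ((fun u => C u + J (f u)) '' U) ≤ C u1 + J (f u1) :=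
      csInf_le bdd2 ⟨u1, hu1, rfl⟩
    have h8 := (abs_le.mp (key (f u1) (hf u1 hu1))).1
    linarith
  rw [abs_sub_le_iff]
  constructor <;> linarith
end

section
/- Perfect conjugate-domain value iteration for linear systems: let f(x,u) = A x + B u with A ∈ ℝ^{n×n} invertible, stage cost C(x,u) = C_i(u) depending only on u with C_i proper, and J : ℝ^n → (-∞, ∞] proper. Define T[J](x) = inf_u { C_i(u) + J(Ax + Bu) }. Then the conjugate of T[J] satisfies (T[J])*(y) = C_i*(-B^T A^{-T} y) + J*(A^{-T} y) for all y ∈ ℝ^n. -/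
/-!
With `q = A⁻ᵀ y` and `p = -Bᵀ q` one has `⟪y, x⟫ = ⟪p, u⟫ + ⟪q, A x + B u⟫`, so
`⟪y, x⟫ - (C u + J (A x + B u))` splits as `(⟪p, u⟫ - C u) + (⟪q, A x + B u⟫ - J (A x + B u))`.
Pulling the infimum over `u` out of the conjugate gives a supremum over `(u, x)`; for fixed `u`,
`x ↦ A x + B u` is a bijection because `A` is invertible, so the supremum over `x` becomes one over
`z = A x + B u`, and the double supremum of a sum of separated terms is the sum of the two conjugates.
-/

open scoped InnerProductSpace

namespace EReal

lemma neg_iInf {ι : Sort*} (f : ι → EReal) : -(⨅ i, f i) = ⨆ i, -f i :=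
  negOrderIso.map_iInf f

lemma add_iSup {ι : Sort*} [Nonempty ι] (a : EReal) (f : ι → EReal) :
    a + ⨆ i, f i = ⨆ i, a + f i := by
  refine le_antisymm (add_le_of_forall_lt fun a' ha' b hb => ?_) ?_
  · obtain ⟨i, hi⟩ := lt_iSup_iff.mp hb
    exact le_iSup_of_le i (add_le_add ha'.le hi.le)
  · exact iSup_le fun i => add_le_add_right (le_iSup f i) a

lemma iSup_add {ι : Sort*} [Nonempty ι] (f : ι → EReal) (a : EReal) :
    (⨆ i, f i) + a = ⨆ i, f i + a := by
  simp only [add_comm _ a, add_iSup]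

lemma iSup_add_iSup {ι κ : Sort*} [Nonempty ι] [Nonempty κ] (f : ι → EReal) (g : κ → EReal) :
    (⨆ i, f i) + ⨆ j, g j = ⨆ (i) (j), f i + g j := by
  rw [iSup_add]
  simp only [add_iSup]

lemma sub_iInf {ι : Sort*} [Nonempty ι] (a : EReal) (f : ι → EReal) :
    a - ⨅ i, f i = ⨆ i, a - f i := by
  simp only [sub_eq_add_neg, neg_iInf, add_iSup]

end EReal

noncomputable def convexConjugate {E : Type*} [NormedAddCommGroup E] [InnerProductSpace ℝ E]
    (f : E → EReal) (y : E) : EReal :=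
  ⨆ x, ((⟪y, x⟫_ℝ : ℝ) : EReal) - f x

section

variable {E F : Type*} [NormedAddCommGroup E] [InnerProductSpace ℝ E] [CompleteSpace E]
  [NormedAddCommGroup F] [InnerProductSpace ℝ F] [CompleteSpace F]

open ContinuousLinearMap

theorem convexConjugate_iInf_add_comp_affine (A : E ≃L[ℝ] E) (B : F →L[ℝ] E)
    (C : F → EReal) (hC : ∀ u, C u ≠ ⊥) (J : E → EReal) (hJ : ∀ z, J z ≠ ⊥) (y : E) :
    convexConjugate (fun x => ⨅ u, C u + J (A x + B u)) y
      = convexConjugate C (-adjoint B (adjoint (A.symm : E →L[ℝ] E) y))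
        + convexConjugate J (adjoint (A.symm : E →L[ℝ] E) y) := by
  set q := adjoint (A.symm : E →L[ℝ] E) y
  set p := -adjoint B q
  have inner_split (u : F) (x : E) :
      ((⟪y, x⟫_ℝ : ℝ) : EReal) - (C u + J (A x + B u))
        = (((⟪p, u⟫_ℝ : ℝ) : EReal) - C u) + (((⟪q, A x + B u⟫_ℝ : ℝ) : EReal) - J (A x + B u)) := by
    have : ⟪y, x⟫_ℝ = ⟪p, u⟫_ℝ + ⟪q, A x + B u⟫_ℝ := by
      simp [p, q, inner_neg_left, adjoint_inner_left, inner_add_right]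
    rw [this, EReal.coe_add, EReal.add_sub_add_comm (Or.inl (hC u)) (Or.inr (hJ _))]
  have affine_surjective (u : F) : Function.Surjective fun x => A x + B u :=
    fun z => ⟨A.symm (z - B u), by simp⟩
  calc convexConjugate (fun x => ⨅ u, C u + J (A x + B u)) y
      = ⨆ (u) (x), ((⟪y, x⟫_ℝ : ℝ) : EReal) - (C u + J (A x + B u)) := by
        simp only [convexConjugate, EReal.sub_iInf]
        exact iSup_comm
    _ = ⨆ (u) (z), (((⟪p, u⟫_ℝ : ℝ) : EReal) - C u) + (((⟪q, z⟫_ℝ : ℝ) : EReal) - J z) := by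
        simp only [inner_split]
        exact iSup_congr fun u => (affine_surjective u).iSup_comp
          (fun z => (((⟪p, u⟫_ℝ : ℝ) : EReal) - C u) + (((⟪q, z⟫_ℝ : ℝ) : EReal) - J z))
    _ = convexConjugate C p + convexConjugate J q := (EReal.iSup_add_iSup _ _).symm

end

theorem conjugate_value_iteration_linear_general {n m : ℕ}
    (A : EuclideanSpace ℝ (Fin n) ≃L[ℝ] EuclideanSpace ℝ (Fin n))
    (B : EuclideanSpace ℝ (Fin m) →L[ℝ] EuclideanSpace ℝ (Fin n))
    (Ci : EuclideanSpace ℝ (Fin m) → EReal)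
    (hCibot : ∀ u, Ci u ≠ ⊥)
    (J : EuclideanSpace ℝ (Fin n) → EReal)
    (hJbot : ∀ z, J z ≠ ⊥)
    (y : EuclideanSpace ℝ (Fin n)) :
    (⨆ x : EuclideanSpace ℝ (Fin n),
        (((inner ℝ y x : ℝ) : EReal)
          - ⨅ u : EuclideanSpace ℝ (Fin m), (Ci u + J (A x + B u))))
      = (⨆ u : EuclideanSpace ℝ (Fin m),
          (((inner ℝ (-(ContinuousLinearMap.adjoint B
              (ContinuousLinearMap.adjoint (A.symm : EuclideanSpace ℝ (Fin n) →L[ℝ]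
                EuclideanSpace ℝ (Fin n)) y))) u : ℝ) : EReal) - Ci u))
        + (⨆ z : EuclideanSpace ℝ (Fin n),
            (((inner ℝ (ContinuousLinearMap.adjoint (A.symm : EuclideanSpace ℝ (Fin n) →L[ℝ]
                EuclideanSpace ℝ (Fin n)) y) z : ℝ) : EReal) - J z)) := by
  exact convexConjugate_iInf_add_comp_affine A B Ci hCibot J hJbot y

/-- Perfect conjugate-domain value iteration for linear systems:
for `f(x,u) = Ax + Bu` with `A` invertible and stage cost `C_i(u)`,
the conjugate of `T[J](x) = inf_u { C_i(u) + J(Ax + Bu) }` satisfies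
`(T[J])*(y) = C_i*(-Bᵀ A⁻ᵀ y) + J*(A⁻ᵀ y)`. -/
theorem conjugate_value_iteration_linear {n m : ℕ}
    (A : EuclideanSpace ℝ (Fin n) ≃L[ℝ] EuclideanSpace ℝ (Fin n))
    (B : EuclideanSpace ℝ (Fin m) →L[ℝ] EuclideanSpace ℝ (Fin n))
    (Ci : EuclideanSpace ℝ (Fin m) → EReal)
    (hCiproper : ∃ u, Ci u ≠ ⊤) (hCibot : ∀ u, Ci u ≠ ⊥)
    (J : EuclideanSpace ℝ (Fin n) → EReal)
    (hJproper : ∃ z, J z ≠ ⊤) (hJbot : ∀ z, J z ≠ ⊥)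
    (y : EuclideanSpace ℝ (Fin n)) :
    (⨆ x : EuclideanSpace ℝ (Fin n),
        (((inner ℝ y x : ℝ) : EReal)
          - ⨅ u : EuclideanSpace ℝ (Fin m), (Ci u + J (A x + B u))))
      = (⨆ u : EuclideanSpace ℝ (Fin m),
          (((inner ℝ (-(ContinuousLinearMap.adjoint B
              (ContinuousLinearMap.adjoint (A.symm : EuclideanSpace ℝ (Fin n) →L[ℝ]
                EuclideanSpace ℝ (Fin n)) y))) u : ℝ) : EReal) - Ci u))
        + (⨆ z : EuclideanSpace ℝ (Fin n),
            (((inner ℝ (ContinuousLinearMap.adjoint (A.symm : EuclideanSpace ℝ (Fin n) →L[ℝ]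
                EuclideanSpace ℝ (Fin n)) y) z : ℝ) : EReal) - J z)) :=
  conjugate_value_iteration_linear_general A B Ci hCibot J hJbot y
end
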